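/- Let G be a finite group, N ⊴ G a normal subgroup with a complement H (so G = N ⋊ H), and χ : N → 𝕋 a one-dimensional character of N that is G-invariant: χ(gng⁻¹) = χ(n) for all g ∈ G, n ∈ N. Then restriction of representations to H induces a bijection between (isomorphism classes of) irreducible complex representations π of G satisfying π(n) = χ(n)·id for all n ∈ N, and (isomorphism classes of) irreducible complex representations of H. -/

import Mathlib

/-!
Every `g ∈ G = N ⋊ H` factors as `g = n * h`, so a representation `π` lying over `χ` satisfies
`π (n * h) = χ n • π h`: it is determined by its restriction to `H`, and `H`-invariant subspaces
and `H`-intertwiners are automatically `G`-invariant and `G`-intertwiners. Conversely, the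
scalars `χ n` commute with every `τ h`, and together with the `G`-invariance of `χ` this makes
`n * h ↦ χ n • τ h` a homomorphism on `N ⋊ H ≃* G`.
-/

section

open SemidirectProduct

variable {G : Type*} [Group G] {N H : Subgroup G}

theorem Subgroup.IsComplement'.exists_mul_eq (hc : N.IsComplement' H) (g : G) :
    ∃ (n : N) (h : H), (n : G) * h = g := by
  obtain ⟨n, hn, h, hh, rfl⟩ := Set.mem_mul.1 (hc.mul_eq ▸ Set.mem_univ g)
  exact ⟨⟨n, hn⟩, ⟨h, hh⟩, rfl⟩

namespace Representation

variable {k V W : Type*} [CommSemiring k] [AddCommMonoid V] [Module k V]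
  [AddCommMonoid W] [Module k W]

section LiesOver

variable {c : N → k} {π : Representation k G V} {π' : Representation k G W}

theorem apply_mul_eq_smul (hπ : ∀ n : N, π n = c n • 1) (n : N) (g : G) :
    π (n * g) = c n • π g := by
  rw [map_mul, hπ, smul_one_mul]

theorem mapsTo_of_isComplement' (hc : N.IsComplement' H) (hπ : ∀ n : N, π n = c n • 1)
    {S : Submodule k V} (hS : ∀ h : H, ∀ v ∈ S, π h v ∈ S) (g : G) (v : V) (hv : v ∈ S) :
    π g v ∈ S := by
  obtain ⟨n, h, rfl⟩ := hc.exists_mul_eq g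
  rw [apply_mul_eq_smul hπ]
  exact S.smul_mem _ (hS h v hv)

theorem isIntertwining_of_isComplement' (hc : N.IsComplement' H)
    (hπ : ∀ n : N, π n = c n • 1) (hπ' : ∀ n : N, π' n = c n • 1) (f : V →ₗ[k] W)
    (hf : ∀ (h : H) (v : V), f (π h v) = π' h (f v)) (g : G) (v : V) :
    f (π g v) = π' g (f v) := by
  obtain ⟨n, h, rfl⟩ := hc.exists_mul_eq g
  simp only [apply_mul_eq_smul hπ, apply_mul_eq_smul hπ', LinearMap.smul_apply, map_smul, hf]

end LiesOver

noncomputable def ofComplement [N.Normal] (hc : N.IsComplement' H) (χ : N →* k)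
    (hχ : ∀ (g : G) (n : N) (hg : g * n * g⁻¹ ∈ N), χ ⟨g * n * g⁻¹, hg⟩ = χ n)
    (τ : Representation k H V) : Representation k G V :=
  (Units.coeHom _).comp <|
    (lift ((Units.map (algebraMap k (Module.End k V)).toMonoidHom).comp χ.toHomUnits)
      τ.asGroupHom fun h => by
        ext n : 2
        simp only [RingHom.toMonoidHom_eq_coe, MonoidHom.coe_comp, Function.comp_apply,
          MulEquiv.toMonoidHom_eq_coe, MonoidHom.coe_coe, Units.coe_map, MonoidHom.coe_toHomUnits,
          MulAut.conj_apply, Units.val_mul]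
        rw [← Algebra.commutes, mul_assoc, Units.mul_inv, mul_one]
        exact congrArg _ (hχ h n _)).comp
    (mulEquivSubgroup hc).symm.toMonoidHom

variable [N.Normal] (hc : N.IsComplement' H) (χ : N →* k)
  (hχ : ∀ (g : G) (n : N) (hg : g * n * g⁻¹ ∈ N), χ ⟨g * n * g⁻¹, hg⟩ = χ n)
  (τ : Representation k H V)

theorem ofComplement_apply_mul (n : N) (h : H) :
    ofComplement hc χ hχ τ (n * h) = χ n • τ h := by
  have : (mulEquivSubgroup hc).symm (n * h) = inl n * inr h :=
    (MulEquiv.symm_apply_eq _).2 (by simp)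
  simp [ofComplement, this, Algebra.smul_def, asGroupHom_apply]

theorem ofComplement_apply_coe_left (n : N) : ofComplement hc χ hχ τ n = χ n • 1 := by
  simpa using ofComplement_apply_mul hc χ hχ τ n 1

theorem ofComplement_apply_coe_right (h : H) : ofComplement hc χ hχ τ h = τ h := by
  simpa using ofComplement_apply_mul hc χ hχ τ 1 h

end Representation

end

open Representation

theorem stmt17_general {G : Type*} [Group G]
    (N H : Subgroup G) [N.Normal] (hc : Subgroup.IsComplement' N H)
    (χ : ↥N →* Circle)
    (hinv : ∀ (g : G) (n : ↥N) (hg : g * (n : G) * g⁻¹ ∈ N),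
      χ ⟨g * (n : G) * g⁻¹, hg⟩ = χ n) :
    -- (a)
    (∀ (V : Type) [AddCommGroup V] [Module ℂ V] [Nontrivial V],
      ∀ π : Representation ℂ G V,
      (∀ n : ↥N, π (n : G) = (χ n : ℂ) • (1 : Module.End ℂ V)) →
      (∀ S : Submodule ℂ V, (∀ g : G, ∀ v ∈ S, π g v ∈ S) → S = ⊥ ∨ S = ⊤) →
      (∀ S : Submodule ℂ V, (∀ h : ↥H, ∀ v ∈ S, π (h : G) v ∈ S) → S = ⊥ ∨ S = ⊤)) ∧
    -- (b)
    (∀ (V V' : Type) [AddCommGroup V] [Module ℂ V] [Nontrivial V]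
        [AddCommGroup V'] [Module ℂ V'] [Nontrivial V'],
      ∀ (π : Representation ℂ G V) (π' : Representation ℂ G V'),
      (∀ n : ↥N, π (n : G) = (χ n : ℂ) • (1 : Module.End ℂ V)) →
      (∀ n : ↥N, π' (n : G) = (χ n : ℂ) • (1 : Module.End ℂ V')) →
      (∀ S : Submodule ℂ V, (∀ g : G, ∀ v ∈ S, π g v ∈ S) → S = ⊥ ∨ S = ⊤) →
      (∀ S : Submodule ℂ V', (∀ g : G, ∀ v ∈ S, π' g v ∈ S) → S = ⊥ ∨ S = ⊤) →
      (∃ e : V ≃ₗ[ℂ] V', ∀ (h : ↥H) (v : V), e (π (h : G) v) = π' (h : G) (e v)) →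
      (∃ e : V ≃ₗ[ℂ] V', ∀ (g : G) (v : V), e (π g v) = π' g (e v))) ∧
    -- (c)
    (∀ (V' : Type) [AddCommGroup V'] [Module ℂ V'] [Nontrivial V'],
      ∀ τ : Representation ℂ ↥H V',
      (∀ S : Submodule ℂ V', (∀ h : ↥H, ∀ v ∈ S, τ h v ∈ S) → S = ⊥ ∨ S = ⊤) →
      ∃ π : Representation ℂ G V',
        (∀ n : ↥N, π (n : G) = (χ n : ℂ) • (1 : Module.End ℂ V')) ∧
        (∀ S : Submodule ℂ V', (∀ g : G, ∀ v ∈ S, π g v ∈ S) → S = ⊥ ∨ S = ⊤) ∧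
        (∀ (h : ↥H) (v : V'), π (h : G) v = τ h v)) := by
  refine ⟨fun V _ _ _ π hπ hirr S hS => hirr S (mapsTo_of_isComplement' hc hπ hS), ?_, ?_⟩
  · rintro V V' _ _ _ _ _ _ π π' hπ hπ' - - ⟨e, he⟩
    exact ⟨e, isIntertwining_of_isComplement' hc hπ hπ' e.toLinearMap he⟩
  · intro V' _ _ _ τ hirr
    have hinv' (g : G) (n : N) (hg) :
        Circle.coeHom.comp χ ⟨g * n * g⁻¹, hg⟩ = Circle.coeHom.comp χ n :=
      congrArg Circle.coeHom (hinv g n hg)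
    refine ⟨ofComplement hc (Circle.coeHom.comp χ) hinv' τ, ofComplement_apply_coe_left _ _ _ τ, ?_,
      fun h v => by rw [ofComplement_apply_coe_right]⟩
    refine fun S hS => hirr S fun h v hv => ?_
    simpa only [ofComplement_apply_coe_right] using hS h v hv

/-- Let `G` be a finite group, `N ⊴ G` with complement `H` (so
`G = N ⋊ H`), and `χ : N → 𝕋` a `G`-invariant one-dimensional character of `N`.  Then
restriction to `H` induces a bijection between isomorphism classes of irreducible complex
representations of `G` lying over `χ` and isomorphism classes of irreducible complex
representations of `H`.  We spell this out as: (a) the restriction to `H` of an irreducible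
representation lying over `χ` is irreducible; (b) two irreducible representations lying over
`χ` with isomorphic restrictions are isomorphic; (c) every irreducible representation of `H`
is the restriction of an irreducible representation of `G` lying over `χ`. -/
theorem stmt17 {G : Type*} [Group G] [Finite G]
    (N H : Subgroup G) [N.Normal] (hc : Subgroup.IsComplement' N H)
    (χ : ↥N →* Circle)
    (hinv : ∀ (g : G) (n : ↥N) (hg : g * (n : G) * g⁻¹ ∈ N),
      χ ⟨g * (n : G) * g⁻¹, hg⟩ = χ n) :
    -- (a)
    (∀ (V : Type) [AddCommGroup V] [Module ℂ V] [Nontrivial V],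
      ∀ π : Representation ℂ G V,
      (∀ n : ↥N, π (n : G) = (χ n : ℂ) • (1 : Module.End ℂ V)) →
      (∀ S : Submodule ℂ V, (∀ g : G, ∀ v ∈ S, π g v ∈ S) → S = ⊥ ∨ S = ⊤) →
      (∀ S : Submodule ℂ V, (∀ h : ↥H, ∀ v ∈ S, π (h : G) v ∈ S) → S = ⊥ ∨ S = ⊤)) ∧
    -- (b)
    (∀ (V V' : Type) [AddCommGroup V] [Module ℂ V] [Nontrivial V]
        [AddCommGroup V'] [Module ℂ V'] [Nontrivial V'],
      ∀ (π : Representation ℂ G V) (π' : Representation ℂ G V'),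
      (∀ n : ↥N, π (n : G) = (χ n : ℂ) • (1 : Module.End ℂ V)) →
      (∀ n : ↥N, π' (n : G) = (χ n : ℂ) • (1 : Module.End ℂ V')) →
      (∀ S : Submodule ℂ V, (∀ g : G, ∀ v ∈ S, π g v ∈ S) → S = ⊥ ∨ S = ⊤) →
      (∀ S : Submodule ℂ V', (∀ g : G, ∀ v ∈ S, π' g v ∈ S) → S = ⊥ ∨ S = ⊤) →
      (∃ e : V ≃ₗ[ℂ] V', ∀ (h : ↥H) (v : V), e (π (h : G) v) = π' (h : G) (e v)) →
      (∃ e : V ≃ₗ[ℂ] V', ∀ (g : G) (v : V), e (π g v) = π' g (e v))) ∧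
    -- (c)
    (∀ (V' : Type) [AddCommGroup V'] [Module ℂ V'] [Nontrivial V'],
      ∀ τ : Representation ℂ ↥H V',
      (∀ S : Submodule ℂ V', (∀ h : ↥H, ∀ v ∈ S, τ h v ∈ S) → S = ⊥ ∨ S = ⊤) →
      ∃ π : Representation ℂ G V',
        (∀ n : ↥N, π (n : G) = (χ n : ℂ) • (1 : Module.End ℂ V')) ∧
        (∀ S : Submodule ℂ V', (∀ g : G, ∀ v ∈ S, π g v ∈ S) → S = ⊥ ∨ S = ⊤) ∧
        (∀ (h : ↥H) (v : V'), π (h : G) v = τ h v)) :=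
  stmt17_general N H hc χ hinv
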